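/- arXiv:1807.02208 — 3 statements merged into one kernel-verified Lean document; each statement's English description precedes it below -/
import Mathlib

section
/- Every generic Vopěnka-like cardinal is a strong limit cardinal. -/
open FirstOrder Language Cardinal Set

universe u

/-- "There is a generic elementary embedding of `M` into `N`": player II has a winning
strategy in the embedding game `G(M, N)`, in which in round `n` player I plays `xₙ ∈ M` and
player II (following a strategy that may depend on all of player I's moves so far) replies
`yₙ ∈ N`, and player II wins a run iff for every `n` and every formula `φ(v₀, …, vₙ)`,
`M ⊨ φ(x₀, …, xₙ) ↔ N ⊨ φ(y₀, …, yₙ)`. -/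
def IsGenericEmbeddable (L : FirstOrder.Language.{u, u}) (M N : Type u) [L.Structure M] [L.Structure N] :
    Prop :=
  ∃ σ : (n : ℕ) → (Fin (n + 1) → M) → N,
    ∀ (x : ℕ → M) (n : ℕ) (φ : L.Formula (Fin (n + 1))),
      φ.Realize (fun i : Fin (n + 1) => x i) ↔
        φ.Realize (fun i : Fin (n + 1) => σ (i : ℕ) (fun j : Fin ((i : ℕ) + 1) => x (j : ℕ)))

/-- An uncountable cardinal `κ` is a generic Vopěnka-like cardinal if for every first-order
language `L` of cardinality less than `κ` and every `κ`-indexed family of `L`-structures, each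
of cardinality less than `κ`, there are two distinct indices such that there is a generic
elementary embedding between the corresponding structures. -/
def IsGenericVopenkaLike (κ : Cardinal.{u}) : Prop :=
  ℵ₀ < κ ∧
    ∀ L : FirstOrder.Language.{u, u}, L.card < κ →
      ∀ (M : κ.ord.ToType → Type u) (S : ∀ i, L.Structure (M i)),
        (∀ i, #(M i) < κ) →
        ∃ i j, i ≠ j ∧ @IsGenericEmbeddable L (M i) (M j) (S i) (S j)

/-! If `κ ≤ 2 ^ μ` for some `μ < κ`, code `κ` many distinct subsets of a set `X` of size `μ` as
one-point structures in a language with a relation symbol for each `x ∈ X`. This language has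
size `ℵ₀ * μ < κ`, and a generic elementary embedding between two of these structures makes them
elementarily equivalent, which forces the coded subsets to coincide. -/

theorem IsGenericEmbeddable.elementarilyEquivalent {L : FirstOrder.Language.{u, u}}
    {M N : Type u} [L.Structure M] [L.Structure N] [Nonempty M] (h : IsGenericEmbeddable L M N) : M ≅[L] N := by
  obtain ⟨σ, hσ⟩ := h
  refine elementarilyEquivalent_iff.2 fun φ => ?_
  have := hσ (fun _ => Classical.arbitrary M) 0 (φ.relabel Empty.elim)
  simpa only [Formula.realize_relabel, Sentence.Realize, Unique.eq_default] using this

namespace FirstOrder.Language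

def predicates (X : Type u) : Language.{u, u} :=
  ⟨fun _ => PEmpty, fun _ => X⟩

theorem card_predicates (X : Type u) : (predicates X).card = ℵ₀ * #X := by
  simp [card_eq_card_functions_add_card_relations, predicates]

/-- `A` coded as a one-point structure: the relations indexed by `x` hold iff `x ∈ A`. -/
def predicates.Point {X : Type u} (_A : Set X) : Type u := PUnit

instance {X : Type u} (A : Set X) : Unique (predicates.Point A) := PUnit.instUnique

instance {X : Type u} (A : Set X) : (predicates X).Structure (predicates.Point A) where
  funMap f := PEmpty.elim f
  RelMap x _ := x ∈ A

theorem predicates.eq_of_elementarilyEquivalent {X : Type u} {A B : Set X}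
    (h : predicates.Point A ≅[predicates X] predicates.Point B) : A = B := by
  ext x
  exact h.realize_sentence (Relations.formula (L := predicates X) (n := 0) x ![])

end FirstOrder.Language

theorem IsGenericVopenkaLike.two_power_lt {κ : Cardinal.{u}} (h : IsGenericVopenkaLike κ)
    {μ : Cardinal.{u}} (hμ : μ < κ) : 2 ^ μ < κ := by
  by_contra! hκ
  obtain ⟨f⟩ : #κ.ord.ToType ≤ #(Set μ.out) := by rwa [mk_ord_toType, mk_set, mk_out]
  have hL : (Language.predicates μ.out).card < κ := by
    rw [Language.card_predicates, mk_out]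
    exact mul_lt_of_lt h.1.le h.1 hμ
  obtain ⟨i, j, hij, hemb⟩ := h.2 _ hL (fun i => Language.predicates.Point (f i))
    (fun _ => inferInstance) (fun _ => by simpa using one_lt_aleph0.trans h.1)
  exact hij (f.injective (Language.predicates.eq_of_elementarilyEquivalent
    (IsGenericEmbeddable.elementarilyEquivalent hemb)))

/-- Every generic Vopěnka-like cardinal is a strong limit cardinal. -/
theorem every_genericVopenkaLike_isStrongLimit (κ : Cardinal.{u})
    (h : IsGenericVopenkaLike κ) : κ.IsStrongLimit :=
  ⟨(aleph0_pos.trans h.1).ne', fun _ => h.two_power_lt⟩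
end

section
/- If κ is an uncountable cardinal that is not a generic Vopěnka-like cardinal, then there are at least 2^κ generically hereditary sets of structures. -/
open FirstOrder Language Cardinal Set

universe u

/-- A generic Vopěnka cardinal is a regular generic Vopěnka-like cardinal. -/
def IsGenericVopenka (κ : Cardinal.{u}) : Prop :=
  κ.IsRegular ∧ IsGenericVopenkaLike κ

/-- An uncountable cardinal `κ` is `ω`-Erdős (in the sense of Baumgartner) if for every club
`C` in `κ` (a subset of the ordinals below `κ` that is closed under suprema and unbounded)
and every regressive `f : [C]^{<ω} → κ` (i.e., `f a < min a` for every nonempty finite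
`a ⊆ C`), there is a subset of `C` of order type `ω` that is homogeneous for `f`. -/
def IsOmegaErdos (κ : Cardinal.{u}) : Prop :=
  ℵ₀ < κ ∧
    ∀ C : Set Ordinal.{u}, C ⊆ Set.Iio κ.ord →
      (∀ s : Set Ordinal.{u}, s ⊆ C → s.Nonempty → sSup s < κ.ord → sSup s ∈ C) →
      (∀ α < κ.ord, ∃ β ∈ C, α < β) →
      ∀ f : Finset Ordinal.{u} → Ordinal.{u},
        (∀ a : Finset Ordinal.{u}, (ha : a.Nonempty) → ↑a ⊆ C → f a < a.min' ha) →
        ∃ g : ℕ → Ordinal.{u}, StrictMono g ∧ Set.range g ⊆ C ∧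
          ∀ a b : Finset Ordinal.{u}, ↑a ⊆ Set.range g → ↑b ⊆ Set.range g →
            a.card = b.card → f a = f b

/-- `κ` is a limit of cardinals satisfying `P`. -/
def IsLimitOf (P : Cardinal.{u} → Prop) (κ : Cardinal.{u}) : Prop :=
  κ ≠ 0 ∧ ∀ α < κ, ∃ η, α < η ∧ η < κ ∧ P η

/-- A first-order language whose relation and function symbols of each arity are indexed by
(sets of) ordinals below `κ`, represented by elements of `κ.ord.toType`. -/
structure SmallLanguage (κ : Cardinal.{u}) where
  fns : ℕ → Set κ.ord.ToType
  rels : ℕ → Set κ.ord.ToType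

/-- The first-order language associated to a `SmallLanguage`. -/
def SmallLanguage.toLanguage {κ : Cardinal.{u}} (L : SmallLanguage κ) :
    FirstOrder.Language.{u, u} where
  Functions n := ↥(L.fns n)
  Relations n := ↥(L.rels n)

/-- An `L`-structure whose universe is the set of ordinals below some ordinal less than `κ`
(represented as the initial segment of `κ.ord.toType` below some point). -/
structure SmallStructure (κ : Cardinal.{u}) (L : FirstOrder.Language.{u, u}) where
  top : κ.ord.ToType
  str : L.Structure ↥(Set.Iio top)

/-- There is a generic elementary embedding between two `SmallStructure`s for the same
language. -/
def SmallStructure.GenEmb {κ : Cardinal.{u}} {L : FirstOrder.Language.{u, u}}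
    (M N : SmallStructure κ L) : Prop :=
  @IsGenericEmbeddable L ↥(Set.Iio M.top) ↥(Set.Iio N.top) M.str N.str

/-- The type of all structures (for languages with symbols indexed by ordinals below `κ`)
whose universe is the set of ordinals below some ordinal less than `κ`. -/
def StructuresType (κ : Cardinal.{u}) : Type u :=
  Σ L : SmallLanguage κ, SmallStructure κ L.toLanguage

/-- A set `𝒜` of structures is generically hereditary if there is a first-order language `L`
of cardinality less than `κ` (with symbols indexed by ordinals below `κ`) such that every
element of `𝒜` is an `L`-structure and, whenever `N ∈ 𝒜` and there is a generic elementary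
embedding of `M` into `N` (for `L`-structures `M`, `N` whose universes are sets of ordinals
below ordinals less than `κ`), also `M ∈ 𝒜`. -/
def GenericallyHereditary (κ : Cardinal.{u}) (𝒜 : Set (StructuresType κ)) : Prop :=
  ∃ L : SmallLanguage κ, L.toLanguage.card < κ ∧
    (∀ M ∈ 𝒜, M.1 = L) ∧
    ∀ M N : SmallStructure κ L.toLanguage,
      (⟨L, N⟩ : StructuresType κ) ∈ 𝒜 → M.GenEmb N → (⟨L, M⟩ : StructuresType κ) ∈ 𝒜

/-! Failure of generic Vopěnka-likeness gives a `κ`-sequence `(Nᵢ)` of small structures, recoded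
on ordinals below `κ`, with no generic elementary embedding `Nᵢ → Nⱼ` for `i ≠ j`. Each set `S`
of indices then yields the class of structures generically embeddable into some `Nᵢ` with
`i ∈ S`; it is generically hereditary because generic embeddings compose, and it determines `S`
because `Nᵢ` lies in the class of `S` only if `i ∈ S`. -/

namespace IsGenericEmbeddable

variable {L : FirstOrder.Language.{u, u}} {M N P : Type u} [L.Structure M] [L.Structure N]
  [L.Structure P]

theorem refl (L : FirstOrder.Language.{u, u}) (M : Type u) [L.Structure M] :
    IsGenericEmbeddable L M M :=
  ⟨fun n x => x (Fin.last n), fun _ _ _ => Iff.rfl⟩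

theorem trans (hMN : IsGenericEmbeddable L M N) (hNP : IsGenericEmbeddable L N P) :
    IsGenericEmbeddable L M P := by
  obtain ⟨σ, hσ⟩ := hMN
  obtain ⟨τ, hτ⟩ := hNP
  refine ⟨fun n x => τ n fun j => σ j fun k => x (Fin.castLE (by omega) k), fun x n φ => ?_⟩
  exact (hσ x n φ).trans (hτ (fun i => σ i fun j : Fin (i + 1) => x j) n φ)

theorem of_equiv (g : M ≃[L] N) : IsGenericEmbeddable L M N :=
  ⟨fun n x => g (x (Fin.last n)), fun _ _ φ => (StrongHomClass.realize_formula g φ).symm⟩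

theorem reduct {L' : FirstOrder.Language.{u, u}} (ϕ : L' →ᴸ L)
    (h : IsGenericEmbeddable L M N) :
    @IsGenericEmbeddable L' M N (ϕ.reduct M) (ϕ.reduct N) := by
  let := ϕ.reduct M
  let := ϕ.reduct N
  obtain ⟨σ, hσ⟩ := h
  exact ⟨σ, fun x n φ => by
    simpa only [LHom.realize_onFormula] using hσ x n (ϕ.onFormula φ)⟩

theorem of_reduct_invLHom {L' : FirstOrder.Language.{u, u}} (e : L ≃ᴸ L')
    (h : @IsGenericEmbeddable L' M N (e.invLHom.reduct M) (e.invLHom.reduct N)) :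
    IsGenericEmbeddable L M N := by
  have reduct_reduct (X : Type u) [S : L.Structure X] :
      @LHom.reduct _ _ e.toLHom X (e.invLHom.reduct X) = S := by
    change (e.invLHom.comp e.toLHom).reduct X = S
    rw [e.left_inv]
    rfl
  have := @reduct L' M N (e.invLHom.reduct M) (e.invLHom.reduct N) L e.toLHom h
  rwa [reduct_reduct, reduct_reduct] at this

end IsGenericEmbeddable

namespace SmallLanguage

variable {κ : Cardinal.{u}} {L : FirstOrder.Language.{u, u}}

def ofEmbeddings (F : ∀ n, L.Functions n ↪ κ.ord.ToType)
    (R : ∀ n, L.Relations n ↪ κ.ord.ToType) : SmallLanguage κ :=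
  ⟨fun n => range (F n), fun n => range (R n)⟩

noncomputable def lequivOfEmbeddings (F : ∀ n, L.Functions n ↪ κ.ord.ToType)
    (R : ∀ n, L.Relations n ↪ κ.ord.ToType) : L ≃ᴸ (ofEmbeddings F R).toLanguage where
  toLHom := ⟨fun n => Equiv.ofInjective _ (F n).injective,
    fun n => Equiv.ofInjective _ (R n).injective⟩
  invLHom := ⟨fun n => (Equiv.ofInjective _ (F n).injective).symm,
    fun n => (Equiv.ofInjective _ (R n).injective).symm⟩
  left_inv := LHom.funext (funext fun _ => funext (Equiv.symm_apply_apply _))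
    (funext fun _ => funext (Equiv.symm_apply_apply _))
  right_inv := LHom.funext (funext fun _ => funext (Equiv.apply_symm_apply _))
    (funext fun _ => funext (Equiv.apply_symm_apply _))

theorem card_toLanguage_ofEmbeddings (F : ∀ n, L.Functions n ↪ κ.ord.ToType)
    (R : ∀ n, L.Relations n ↪ κ.ord.ToType) : (ofEmbeddings F R).toLanguage.card = L.card :=
  mk_congr <| .symm <| .sumCongr (.sigmaCongrRight fun n => .ofInjective _ (F n).injective)
    (.sigmaCongrRight fun n => .ofInjective _ (R n).injective)

theorem exists_lequiv (hL : L.card < κ) :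
    ∃ L' : SmallLanguage κ, L'.toLanguage.card < κ ∧ Nonempty (L ≃ᴸ L'.toLanguage) := by
  have embed {α : Type u} (f : α → L.Symbols) (hf : f.Injective) :
      Nonempty (α ↪ κ.ord.ToType) := by
    rw [← Cardinal.le_def, mk_ord_toType]
    exact ((mk_le_of_injective hf).trans_lt hL).le
  have F n := (embed (fun f : L.Functions n => .inl ⟨n, f⟩) fun _ _ h => by simpa using h).some
  have R n := (embed (fun r : L.Relations n => .inr ⟨n, r⟩) fun _ _ h => by simpa using h).some
  exact ⟨ofEmbeddings F R, (card_toLanguage_ofEmbeddings F R).trans_lt hL,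
    ⟨lequivOfEmbeddings F R⟩⟩

end SmallLanguage

theorem exists_equiv_Iio_of_mk_lt {κ : Cardinal.{u}} {M : Type u} (h : #M < κ) :
    ∃ t : κ.ord.ToType, Nonempty (M ≃ Iio t) := by
  have : IsWellOrder κ.ord.ToType (· < ·) := isWellOrder_lt
  let t : κ.ord.ToType := Ordinal.ToType.mk ⟨(#M).ord, ord_lt_ord.2 h⟩
  have ht : Ordinal.typein (· < ·) t = (#M).ord :=
    congrArg Subtype.val (Ordinal.ToType.mk.symm_apply_apply _)
  refine ⟨t, Cardinal.eq.1 ?_⟩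
  rw [show #(Iio t) = (Ordinal.typein (· < ·) t).card from rfl, ht, card_ord]

namespace SmallStructure

variable {κ : Cardinal.{u}} {L : FirstOrder.Language.{u, u}} {ι : Type*}

theorem GenEmb.refl (M : SmallStructure κ L) : M.GenEmb M :=
  @IsGenericEmbeddable.refl L _ M.str

theorem GenEmb.trans {M N P : SmallStructure κ L} (hMN : M.GenEmb N) (hNP : N.GenEmb P) :
    M.GenEmb P :=
  @IsGenericEmbeddable.trans L _ _ _ M.str N.str P.str hMN hNP

def genEmbClosure (N : ι → SmallStructure κ L) (S : Set ι) : Set (SmallStructure κ L) :=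
  {M | ∃ i ∈ S, M.GenEmb (N i)}

theorem mem_genEmbClosure_of_genEmb {N : ι → SmallStructure κ L} {S : Set ι}
    {M M' : SmallStructure κ L} (hM' : M' ∈ genEmbClosure N S) (h : M.GenEmb M') :
    M ∈ genEmbClosure N S :=
  let ⟨i, hi, hM'i⟩ := hM'
  ⟨i, hi, h.trans hM'i⟩

theorem genEmbClosure_injective {N : ι → SmallStructure κ L}
    (hN : ∀ i j, (N i).GenEmb (N j) → i = j) : (genEmbClosure N).Injective := by
  suffices ∀ S T, genEmbClosure N S ⊆ genEmbClosure N T → S ⊆ T from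
    fun S T h => (this S T h.le).antisymm (this T S h.ge)
  intro S T hST i hi
  obtain ⟨j, hj, hij⟩ := hST ⟨i, hi, GenEmb.refl (N i)⟩
  rwa [hN i j hij]

end SmallStructure

open SmallStructure in
theorem genericallyHereditary_image_mk {κ : Cardinal.{u}} {L : SmallLanguage κ}
    (hL : L.toLanguage.card < κ) {𝒜 : Set (SmallStructure κ L.toLanguage)}
    (h𝒜 : ∀ M N, N ∈ 𝒜 → M.GenEmb N → M ∈ 𝒜) :
    GenericallyHereditary κ (Sigma.mk L '' 𝒜) := by
  refine ⟨L, hL, ?_, fun M N hN hMN => ⟨M, h𝒜 M N ?_ hMN, rfl⟩⟩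
  · rintro _ ⟨M, -, rfl⟩
    rfl
  · obtain ⟨N', hN', hN'N⟩ := hN
    rwa [← sigma_mk_injective hN'N]

open SmallStructure in
theorem two_pow_le_card_genericallyHereditary_of_antichain {κ : Cardinal.{u}}
    {L : SmallLanguage κ} (hL : L.toLanguage.card < κ)
    {N : κ.ord.ToType → SmallStructure κ L.toLanguage}
    (hN : ∀ i j, (N i).GenEmb (N j) → i = j) :
    2 ^ κ ≤ #{𝒜 : Set (StructuresType κ) | GenericallyHereditary κ 𝒜} := by
  let f (S : Set κ.ord.ToType) :
      {𝒜 : Set (StructuresType κ) | GenericallyHereditary κ 𝒜} :=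
    ⟨Sigma.mk L '' genEmbClosure N S,
      genericallyHereditary_image_mk hL fun _ _ => mem_genEmbClosure_of_genEmb⟩
  have hf : f.Injective := fun S T hST =>
    genEmbClosure_injective hN <|
      image_injective.2 (sigma_mk_injective (i := L)) (Subtype.ext_iff.1 hST)
  calc 2 ^ κ = #(Set κ.ord.ToType) := by rw [mk_set, mk_ord_toType]
    _ ≤ _ := mk_le_of_injective hf

theorem exists_genEmb_antichain_of_not_isGenericVopenkaLike {κ : Cardinal.{u}} (hκ : ℵ₀ < κ)
    (h : ¬ IsGenericVopenkaLike κ) :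
    ∃ L : SmallLanguage κ, L.toLanguage.card < κ ∧
      ∃ N : κ.ord.ToType → SmallStructure κ L.toLanguage,
        ∀ i j, (N i).GenEmb (N j) → i = j := by
  obtain ⟨L, hL, M, S, hM, hMS⟩ := by
    unfold IsGenericVopenkaLike at h
    push Not at h
    exact h hκ
  obtain ⟨L', hL', ⟨e⟩⟩ := SmallLanguage.exists_lequiv hL
  choose t ht using fun i => exists_equiv_Iio_of_mk_lt (hM i)
  let eqv i : M i ≃ Iio (t i) := (ht i).some
  let : ∀ i, L.Structure (Iio (t i)) := fun i => @Equiv.inducedStructure L _ _ (S i) (eqv i)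
  refine ⟨L', hL', fun i => ⟨t i, e.invLHom.reduct _⟩, fun i j hij => ?_⟩
  by_contra hne
  let := S i
  let := S j
  exact hMS i j hne <|
    (IsGenericEmbeddable.of_equiv (Equiv.inducedStructureEquiv (eqv i))).trans <|
      (IsGenericEmbeddable.of_reduct_invLHom e hij).trans
        (IsGenericEmbeddable.of_equiv (Equiv.inducedStructureEquiv (eqv j)).symm)

/-- If `κ` is an uncountable cardinal that is not a generic Vopěnka-like cardinal, then there
are at least `2 ^ κ` generically hereditary sets of structures. -/
theorem two_pow_le_generically_hereditary_of_not_genericVopenkaLike (κ : Cardinal.{u})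
    (hκ : ℵ₀ < κ) (h : ¬ IsGenericVopenkaLike κ) :
    2 ^ κ ≤ #{𝒜 : Set (StructuresType κ) | GenericallyHereditary κ 𝒜} :=
  let ⟨_, hL, _, hN⟩ := exists_genEmb_antichain_of_not_isGenericVopenkaLike hκ h
  two_pow_le_card_genericallyHereditary_of_antichain hL hN
end

section
/- Let κ be a generic Vopěnka cardinal, let L be a first-order language of cardinality less than κ, and let 𝓑 be a set of L-structures, each with universe the set of ordinals below some ordinal less than κ, that is upward closed under generic elementary embeddability (i.e., for all such L-structures M and N, if M ∈ 𝓑 and there is a generic elementary embedding of M into N, then N ∈ 𝓑). Then 𝓑 is the upward closure of a small subset: there is 𝓑₀ ⊆ 𝓑 with |𝓑₀| < κ such that every structure in 𝓑 admits a generic elementary embedding from some structure in 𝓑₀. -/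
open FirstOrder Language Cardinal Set

universe u

/-! If no subfamily of size `< κ` generates `𝓑`, a recursion of length `κ` picks `Fᵢ ∈ 𝓑`
admitting no generic elementary embedding from any earlier `Fⱼ`. Vopěnka gives a generic
embedding between two of them, but in an unknown direction. To fix the direction, `Fᵢ` is
padded to a structure on `[0, tᵢ)` with `tᵢ > top Fᵢ` strictly increasing in `i`, adding a
predicate for the old universe and the ordinal order. A generic embedding of padded structures
preserves the order, so it forces `tᵢ ≤ tⱼ` (otherwise player I, opening with `tⱼ` and then
replaying II's answers, produces an infinite descending sequence of ordinals); relativising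
formulas to the predicate turns it into a generic embedding of `Fᵢ` into `Fⱼ`. -/

open Structure Function

namespace FirstOrder.Language

section Relativize

variable {L L' : Language} {α : Type*}

def BoundedFormula.relativize (ϕ : L →ᴸ L') (U : L'.Relations 1) :
    ∀ {n}, L.BoundedFormula α n → L'.BoundedFormula α n
  | _, .falsum => .falsum
  | _, .equal t₁ t₂ => .equal (ϕ.onTerm t₁) (ϕ.onTerm t₂)
  | _, .rel R ts => .rel (ϕ.onRelation R) fun i => ϕ.onTerm (ts i)
  | _, .imp f g => (relativize ϕ U f).imp (relativize ϕ U g)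
  | n, .all f =>
    .all ((U.boundedFormula₁ (.var (.inr (Fin.last n)))).imp (relativize ϕ U f))

variable {M N : Type*} [L.Structure M] [L.Structure N] [L'.Structure N]
  (ϕ : L →ᴸ L') [ϕ.IsExpansionOn N] {U : L'.Relations 1} (e : M ↪[L] N)

theorem BoundedFormula.realize_relativize (hU : ∀ y : N, RelMap U ![y] ↔ y ∈ range e) {n : ℕ}
    (φ : L.BoundedFormula α n) (v : α → M) (xs : Fin n → M) :
    (φ.relativize ϕ U).Realize (e ∘ v) (e ∘ xs) ↔ φ.Realize v xs := by
  induction φ with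
  | falsum => rfl
  | equal t₁ t₂ =>
    simp only [relativize, Realize, LHom.realize_onTerm, ← Sum.comp_elim,
      HomClass.realize_term, e.injective.eq_iff]
  | rel R ts =>
    simp only [relativize, Realize, LHom.realize_onTerm, LHom.map_onRelation, ← Sum.comp_elim,
      HomClass.realize_term]
    exact e.map_rel R _
  | imp f g ihf ihg => simp only [relativize, realize_imp, ihf, ihg]
  | all f ih =>
    simp only [relativize, realize_all, realize_imp, realize_rel₁, Term.realize_var,
      Sum.elim_inr, Fin.snoc_last, hU, forall_mem_range, ← Fin.comp_snoc, ih]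

theorem Formula.realize_relativize (hU : ∀ y : N, RelMap U ![y] ↔ y ∈ range e)
    (φ : L.Formula α) (v : α → M) :
    Formula.Realize (φ.relativize ϕ U) (e ∘ v) ↔ φ.Realize v := by
  have h := BoundedFormula.realize_relativize ϕ e hU φ v default
  rwa [Subsingleton.elim (e ∘ default) default] at h

end Relativize

end FirstOrder.Language

section GenericEmbedding

variable {L L' : FirstOrder.Language.{u, u}} {M₁ M₂ N₁ N₂ : Type u} [L.Structure M₁]
  [L.Structure M₂] [L.Structure N₁] [L.Structure N₂] [L'.Structure N₁] [L'.Structure N₂]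

theorem IsGenericEmbeddable.of_relativize (ϕ : L →ᴸ L') [ϕ.IsExpansionOn N₁]
    [ϕ.IsExpansionOn N₂] {U : L'.Relations 1} (e₁ : M₁ ↪[L] N₁) (e₂ : M₂ ↪[L] N₂)
    (hU₁ : ∀ y, RelMap U ![y] ↔ y ∈ range e₁) (hU₂ : ∀ y, RelMap U ![y] ↔ y ∈ range e₂)
    (h : IsGenericEmbeddable L' N₁ N₂) : IsGenericEmbeddable L M₁ M₂ := by
  obtain ⟨σ, hσ⟩ := h
  have hmark : ∀ n (v : Fin (n + 1) → M₁), σ n (e₁ ∘ v) ∈ range e₂ := by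
    intro n v
    -- `v` is the beginning of the run that keeps repeating its last move
    let x : ℕ → M₁ := fun m => v ⟨min m n, by omega⟩
    have hx : (fun j : Fin (n + 1) => x j) = v := funext fun j => by
      simp only [x, Nat.min_eq_left (Nat.lt_succ_iff.mp j.isLt)]
    have h := hσ (e₁ ∘ x) n (U.formula₁ (.var (Fin.last n)))
    simp only [Formula.realize_rel₁, Term.realize_var, hU₁, hU₂] at h
    rw [← hx]
    exact h.1 (mem_range_self _)
  choose τ hτ using hmark
  refine ⟨τ, fun x n φ => ?_⟩
  have hrun : (fun i : Fin (n + 1) => σ i fun j => e₁ (x j)) =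
      e₂ ∘ fun i : Fin (n + 1) => τ i fun j => x j :=
    funext fun i => (hτ _ _).symm
  have h := hσ (e₁ ∘ x) n (φ.relativize ϕ U)
  rw [comp_def, hrun] at h
  exact (Formula.realize_relativize ϕ e₁ hU₁ φ _).symm.trans
    (h.trans (Formula.realize_relativize ϕ e₂ hU₂ φ _))

end GenericEmbedding

def echoRun {M N : Type*} (σ : (n : ℕ) → (Fin (n + 1) → M) → N) (g : N → M) (x₀ : M) : ℕ → M
  | 0 => x₀
  | n + 1 => g (σ n fun j => echoRun σ g x₀ j)

theorem not_isGenericEmbeddable_of_wellFounded {L : FirstOrder.Language.{u, u}} {M N : Type u}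
    [L.Structure M] [L.Structure N] (R : L.Relations 2)
    (hR : WellFounded fun a b : M => RelMap R ![a, b]) (g : N → M)
    (hg : ∀ y y' : N, RelMap R ![g y, g y'] ↔ RelMap R ![y, y']) (x₀ : M)
    (hx₀ : ∀ y, RelMap R ![g y, x₀]) : ¬ IsGenericEmbeddable L M N := by
  rintro ⟨σ, hσ⟩
  let x := echoRun σ g x₀
  have hx0 : x 0 = x₀ := by simp only [x, echoRun]
  have hx : ∀ n, x (n + 1) = g (σ n fun j => x j) := fun n => by simp only [x, echoRun]
  have hdesc : ∀ n, RelMap R ![x (n + 1), x n] := by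
    intro n
    induction n with
    | zero => rw [hx, hx0]; exact hx₀ _
    | succ n ih =>
      have h := hσ x (n + 1) (R.formula₂ (.var (Fin.last (n + 1))) (.var ⟨n, by omega⟩))
      simp only [Formula.realize_rel₂, Term.realize_var] at h
      rw [hx, hx, hg]
      exact h.1 ih
  exact (wellFounded_iff_isEmpty_descending_chain.1 hR).elim ⟨x, hdesc⟩

namespace FirstOrder.Language

inductive MarkedOrderRel : ℕ → Type u
  | mark : MarkedOrderRel 1
  | lt : MarkedOrderRel 2

instance (n : ℕ) : Subsingleton (MarkedOrderRel.{u} n) := ⟨by rintro ⟨⟩ ⟨⟩ <;> rfl⟩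

protected def markedOrder : Language.{u, u} := ⟨fun _ => PEmpty, MarkedOrderRel⟩

theorem card_markedOrder_le : Language.markedOrder.{u}.card ≤ ℵ₀ := by
  have : ∀ n, Countable (Language.markedOrder.{u}.Functions n) := fun _ =>
    inferInstanceAs (Countable PEmpty)
  have : ∀ n, Countable (Language.markedOrder.{u}.Relations n) := fun n =>
    inferInstanceAs (Countable (MarkedOrderRel n))
  exact mk_le_aleph0

theorem card_sum_markedOrder_lt {L : Language.{u, u}} {κ : Cardinal.{u}} (hκ : ℵ₀ < κ)
    (hL : L.card < κ) : (L.sum Language.markedOrder).card < κ := by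
  rw [card_sum, lift_id, lift_id]
  exact add_lt_of_lt hκ.le hL (card_markedOrder_le.trans_lt hκ)

end FirstOrder.Language

def Padded {M N : Type u} (_e : M ↪ N) (_d : N) : Type u := N

namespace Padded

variable {L : FirstOrder.Language.{u, u}} {M N : Type u} (e : M ↪ N) (d : N)

-- `d` is the value of function symbols at arguments outside the image of `e`.
noncomputable instance [L.Structure M] : L.Structure (Padded e d) where
  funMap f := extend (e ∘ ·) (fun w => e (funMap f w)) fun _ => d
  RelMap r := extend (e ∘ ·) (RelMap r) fun _ => False

instance [LT N] : Language.markedOrder.Structure (Padded e d) where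
  funMap f := PEmpty.elim f
  RelMap
    | .mark, v => v 0 ∈ range e
    | .lt, v => @LT.lt N _ (v 0) (v 1)

def embedding [L.Structure M] : M ↪[L] Padded e d where
  toFun := e
  inj' := e.injective
  map_fun' f x := (e.injective.comp_left.extend_apply (fun w => e (funMap f w)) _ x).symm
  map_rel' r x := iff_of_eq (e.injective.comp_left.extend_apply (RelMap r) _ x)

variable {M₁ M₂ : Type u} [L.Structure M₁] [L.Structure M₂]

theorem le_of_isGenericEmbeddable {W : Type u} [LinearOrder W] [WellFoundedLT W] {t₁ t₂ : W}
    {e₁ : M₁ ↪ Iio t₁} {e₂ : M₂ ↪ Iio t₂} {d₁ : Iio t₁} {d₂ : Iio t₂}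
    (h : IsGenericEmbeddable (L.sum Language.markedOrder) (Padded e₁ d₁) (Padded e₂ d₂)) :
    t₁ ≤ t₂ := by
  by_contra! ht
  refine not_isGenericEmbeddable_of_wellFounded (M := Padded e₁ d₁) (N := Padded e₂ d₂)
    (Sum.inr MarkedOrderRel.lt) ?_ (inclusion (Iio_subset_Iio ht.le)) (fun _ _ => Iff.rfl)
    ⟨t₂, ht⟩ (fun y => y.2) h
  exact wellFounded_lt (α := Iio t₁)

end Padded

theorem IsGenericEmbeddable.of_padded {L : FirstOrder.Language.{u, u}} {M₁ M₂ N₁ N₂ : Type u}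
    [L.Structure M₁] [L.Structure M₂] [LT N₁] [LT N₂] {e₁ : M₁ ↪ N₁} {e₂ : M₂ ↪ N₂}
    {d₁ : N₁} {d₂ : N₂}
    (h : IsGenericEmbeddable (L.sum Language.markedOrder) (Padded e₁ d₁) (Padded e₂ d₂)) :
    IsGenericEmbeddable L M₁ M₂ :=
  h.of_relativize LHom.sumInl (U := Sum.inr MarkedOrderRel.mark) (Padded.embedding e₁ d₁)
    (Padded.embedding e₂ d₂) (fun _ => Iff.rfl) fun _ => Iff.rfl

theorem exists_forall_restrict_Iio {ι α : Type*} [Preorder ι] [WellFoundedLT ι]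
    (P : ∀ i : ι, (Iio i → α) → α → Prop) (h : ∀ i f, ∃ a, P i f a) :
    ∃ F : ι → α, ∀ i, P i (fun j => F j) (F i) := by
  choose c hc using h
  refine ⟨wellFounded_lt.fix fun i F => c i fun j => F j j.2, fun i => ?_⟩
  rw [WellFounded.fix_eq]
  exact hc _ _

theorem exists_seq_forall_lt_not_rel {ι α : Type u} [LinearOrder ι] [WellFoundedLT ι]
    {κ : Cardinal.{u}} (hι : ∀ i : ι, #(Iio i) < κ) {E : α → α → Prop} {𝓑 : Set α}
    (h𝓑 : ∀ 𝓑₀ ⊆ 𝓑, #𝓑₀ < κ → ∃ N ∈ 𝓑, ∀ M ∈ 𝓑₀, ¬ E M N) :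
    ∃ F : ι → α, (∀ i, F i ∈ 𝓑) ∧ ∀ ⦃j i⦄, j < i → ¬ E (F j) (F i) := by
  obtain ⟨F, hF⟩ := exists_forall_restrict_Iio
    (fun i f N => N ∈ 𝓑 ∧ ∀ j, f j ∈ 𝓑 → ¬ E (f j) N) fun i f => by
      obtain ⟨N, hN, hNE⟩ := h𝓑 (range f ∩ 𝓑) inter_subset_right
        ((mk_le_mk_of_subset inter_subset_left).trans_lt (mk_range_le.trans_lt (hι i)))
      exact ⟨N, hN, fun j hj => hNE _ ⟨mem_range_self j, hj⟩⟩
  exact ⟨F, fun i => (hF i).1, fun j i hji => (hF i).2 ⟨j, hji⟩ (hF j).1⟩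

namespace Cardinal.IsRegular

variable {κ : Cardinal.{u}} (hκ : κ.IsRegular)
include hκ

theorem exists_gt_of_mk_lt {s : Set κ.ord.ToType} (hs : #s < κ) : ∃ a, ∀ b ∈ s, b < a := by
  by_contra! h
  refine (Order.cof_le h).not_gt ?_
  rwa [Ordinal.cof_toType, hκ.cof_ord]

theorem exists_strictMono_gt (g : κ.ord.ToType → κ.ord.ToType) :
    ∃ t : κ.ord.ToType → κ.ord.ToType, StrictMono t ∧ ∀ i, g i < t i := by
  obtain ⟨t, ht⟩ := exists_forall_restrict_Iio (fun i f a => g i < a ∧ ∀ j, f j < a)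
    fun i f => by
      have hs : #(insert (g i) (range f) : Set κ.ord.ToType) < κ :=
        mk_insert_le.trans_lt <| add_lt_of_lt hκ.aleph0_le
          (mk_range_le.trans_lt (by simpa using mk_Iio_lt i))
          (one_lt_aleph0.trans_le hκ.aleph0_le)
      obtain ⟨a, ha⟩ := hκ.exists_gt_of_mk_lt hs
      exact ⟨a, ha _ (mem_insert _ _), fun j => ha _ (mem_insert_of_mem _ (mem_range_self j))⟩
  exact ⟨t, fun j i hji => (ht i).2 ⟨j, hji⟩, fun i => (ht i).1⟩

end Cardinal.IsRegular

theorem upward_closed_generated_by_small_subset_general (κ : Cardinal.{u}) (hκ : IsGenericVopenka κ)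
    (L : FirstOrder.Language.{u, u}) (hL : L.card < κ)
    (𝓑 : Set (SmallStructure κ L)) :
    ∃ 𝓑₀ ⊆ 𝓑, #↥𝓑₀ < κ ∧ ∀ N ∈ 𝓑, ∃ M ∈ 𝓑₀, SmallStructure.GenEmb M N := by
  obtain ⟨hreg, hℵ, hvop⟩ := hκ
  by_contra! hgen
  obtain ⟨F, -, hF⟩ := exists_seq_forall_lt_not_rel
    (fun i : κ.ord.ToType => by simpa using mk_Iio_lt i) hgen
  obtain ⟨t, ht_mono, ht⟩ := hreg.exists_strictMono_gt fun i => (F i).top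
  let e i := embeddingOfSubset _ _ (Iio_subset_Iio (ht i).le)
  let d i : Iio (t i) := ⟨(F i).top, ht i⟩
  obtain ⟨i, j, hij, hemb⟩ := hvop (L.sum Language.markedOrder) (card_sum_markedOrder_lt hℵ hL)
    (fun i => Padded (e i) (d i)) (fun i => letI := (F i).str; inferInstance)
    fun i => (by simpa using mk_Iio_lt (t i) : #(Iio (t i)) < κ)
  let := (F i).str
  let := (F j).str
  have hlt : i < j := hij.lt_or_gt.resolve_right fun hji =>
    (ht_mono hji).not_ge (Padded.le_of_isGenericEmbeddable hemb)
  exact hF hlt hemb.of_padded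

/-- Let `κ` be a generic Vopěnka cardinal, `L` a language of cardinality less than `κ`, and
`𝓑` a set of `L`-structures (each with universe the set of ordinals below some ordinal less
than `κ`) that is upward closed under generic elementary embeddability.  Then `𝓑` is
the upward closure of a subset `𝓑₀ ⊆ 𝓑` of cardinality less than `κ`. -/
theorem upward_closed_generated_by_small_subset (κ : Cardinal.{u}) (hκ : IsGenericVopenka κ)
    (L : FirstOrder.Language.{u, u}) (hL : L.card < κ)
    (𝓑 : Set (SmallStructure κ L))
    (hup : ∀ M N : SmallStructure κ L, M ∈ 𝓑 → M.GenEmb N → N ∈ 𝓑) :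
    ∃ 𝓑₀ ⊆ 𝓑, #↥𝓑₀ < κ ∧ ∀ N ∈ 𝓑, ∃ M ∈ 𝓑₀, SmallStructure.GenEmb M N :=
  upward_closed_generated_by_small_subset_general κ hκ L hL 𝓑
end
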